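/- arXiv:2311.10878 — 18 statements merged into one kernel-verified Lean document; each statement's English description precedes it below -/
import Mathlib

section
/- Let f : ℝ⁺ → ℝ⁺ be a function such that f(x) + f(f(x)) = 2x for all x > 0. Then f(x) = x for all x > 0. -/
/-! The orbit `uₙ = fⁿ(x)` satisfies `uₙ₊₂ + uₙ₊₁ = 2uₙ`, whose characteristic roots are `1` and `-2`,
so `3uₙ = 3x + (f x - x)(1 - (-2)ⁿ)`. Unless `f x = x`, the term `(-2)ⁿ` makes `uₙ` negative along
the even or along the odd indices, contradicting `uₙ > 0`. -/

theorem three_mul_eq_of_add_eq_two_mul {R : Type*} [CommRing R] {u : ℕ → R}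
    (h : ∀ n, u (n + 2) + u (n + 1) = 2 * u n) :
    ∀ n, 3 * u n = 3 * u 0 + (u 1 - u 0) * (1 - (-2) ^ n)
  | 0 => by ring
  | 1 => by ring
  | n + 2 => by
    linear_combination 3 * h n + 2 * three_mul_eq_of_add_eq_two_mul h n
      - three_mul_eq_of_add_eq_two_mul h (n + 1)

theorem not_forall_mul_pow_le {k q : ℝ} (hk : 0 < k) (hq : 1 < q) (c : ℝ) :
    ¬ ∀ m : ℕ, k * q ^ m ≤ c := fun h ↦
  let ⟨m, hm⟩ :=
    (((tendsto_pow_atTop_atTop_of_one_lt hq).const_mul_atTop hk).eventually_gt_atTop c).exists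
  (h m).not_gt hm

theorem eq_zero_of_forall_nonneg_add_mul_pow {r c d : ℝ} (hr : r < -1)
    (h : ∀ n, 0 ≤ c + d * r ^ n) : d = 0 := by
  have hq : 1 < r ^ 2 := by nlinarith
  rcases lt_trichotomy d 0 with hd | hd | hd
  · refine absurd (fun m ↦ ?_) (not_forall_mul_pow_le (neg_pos.2 hd) hq c)
    linear_combination h (2 * m)
  · exact hd
  · refine absurd (fun m ↦ ?_) (not_forall_mul_pow_le (by nlinarith : 0 < d * -r) hq c)
    linear_combination h (2 * m + 1)

theorem stmt_0 (f : ℝ → ℝ) (hpos : ∀ x > 0, f x > 0)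
    (hfe : ∀ x > 0, f x + f (f x) = 2 * x) :
    ∀ x > 0, f x = x := by
  intro x hx
  set u : ℕ → ℝ := fun n ↦ f^[n] x
  have hu_succ (n : ℕ) : u (n + 1) = f (u n) := Function.iterate_succ_apply' f n x
  have hu_pos (n : ℕ) : 0 < u n := (Set.MapsTo.iterate (s := Set.Ioi 0) hpos n) hx
  have hu_rec (n : ℕ) : u (n + 2) + u (n + 1) = 2 * u n := by
    rw [hu_succ (n + 1), hu_succ n]
    exact (add_comm _ _).trans (hfe _ (hu_pos n))
  have hd : -(f x - x) = 0 :=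
    eq_zero_of_forall_nonneg_add_mul_pow (r := -2) (c := 3 * x + (f x - x)) (by norm_num) fun n ↦ by
      have h3 : 3 * u n = 3 * x + (f x - x) * (1 - (-2) ^ n) :=
        three_mul_eq_of_add_eq_two_mul hu_rec n
      linarith [hu_pos n]
  linarith
end

section
/- Let f : [0,∞) → [0,∞) be a function such that f(x) ≥ x for all x ≥ 0 and f(f(x) − x) = 2x for all x ≥ 0. Then f(x) = 2x for all x ≥ 0. -/
/-!
Iterate `x ↦ f x - x` from `x`. By the functional equation the orbit `u` satisfies
`u (n + 2) = 2 u n - u (n + 1)`, whose characteristic roots are `1` and `-2`. So `u (n + 1) - u n`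
is `(u 1 - u 0) (-2) ^ n`, while `u (n + 1) + 2 u n` is constant; since the orbit stays
nonnegative, the latter bounds the former, which forces `u 1 = u 0`, i.e. `f x = 2 x`.
-/

theorem eq_zero_of_forall_abs_mul_pow_le {c K r : ℝ} (hr : 1 < r) (h : ∀ n : ℕ, |c| * r ^ n ≤ K) :
    c = 0 := by
  by_contra hc
  have hgrow : Filter.Tendsto (fun n : ℕ => |c| * r ^ n) Filter.atTop Filter.atTop :=
    (tendsto_pow_atTop_atTop_of_one_lt hr).const_mul_atTop (abs_pos.mpr hc)
  obtain ⟨n, hn⟩ := (hgrow.eventually_gt_atTop K).exists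
  exact (h n).not_gt hn

section Recurrence

variable {u : ℕ → ℝ} (hrec : ∀ n, u (n + 2) = 2 * u n - u (n + 1))
include hrec

theorem add_two_mul_eq_of_recurrence (n : ℕ) : u (n + 1) + 2 * u n = u 1 + 2 * u 0 := by
  induction n with
  | zero => rfl
  | succ n ih => linarith [hrec n]

theorem sub_eq_mul_neg_two_pow_of_recurrence (n : ℕ) :
    u (n + 1) - u n = (u 1 - u 0) * (-2) ^ n := by
  induction n with
  | zero => simp
  | succ n ih => rw [pow_succ, ← mul_assoc, ← ih]; linarith [hrec n]

theorem apply_one_eq_apply_zero_of_recurrence_of_nonneg (hu : ∀ n, 0 ≤ u n) : u 1 = u 0 := by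
  have hbound (n : ℕ) : |u 1 - u 0| * 2 ^ n ≤ u 1 + 2 * u 0 := by
    have hsum := add_two_mul_eq_of_recurrence hrec n
    have hdiff := sub_eq_mul_neg_two_pow_of_recurrence hrec n
    calc |u 1 - u 0| * 2 ^ n = |u (n + 1) - u n| := by
          rw [hdiff, abs_mul, abs_pow, abs_neg, abs_two]
      _ ≤ u 1 + 2 * u 0 := by
          have := hu n
          have := hu (n + 1)
          exact abs_le.mpr ⟨by linarith, by linarith⟩
  exact sub_eq_zero.mp (eq_zero_of_forall_abs_mul_pow_le one_lt_two hbound)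

end Recurrence

def diffOrbit (f : ℝ → ℝ) (x : ℝ) : ℕ → ℝ
  | 0 => x
  | n + 1 => f (diffOrbit f x n) - diffOrbit f x n

theorem diffOrbit_nonneg {f : ℝ → ℝ} (hge : ∀ x ≥ 0, f x ≥ x) {x : ℝ} (hx : 0 ≤ x) (n : ℕ) :
    0 ≤ diffOrbit f x n := by
  induction n with
  | zero => exact hx
  | succ n ih => exact sub_nonneg.mpr (hge _ ih)

theorem diffOrbit_add_two {f : ℝ → ℝ} (hge : ∀ x ≥ 0, f x ≥ x)
    (hfe : ∀ x ≥ 0, f (f x - x) = 2 * x) {x : ℝ} (hx : 0 ≤ x) (n : ℕ) :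
    diffOrbit f x (n + 2) = 2 * diffOrbit f x n - diffOrbit f x (n + 1) := by
  rw [diffOrbit, diffOrbit, hfe _ (diffOrbit_nonneg hge hx n)]

theorem stmt_1_general (f : ℝ → ℝ)
    (hge : ∀ x ≥ 0, f x ≥ x)
    (hfe : ∀ x ≥ 0, f (f x - x) = 2 * x) :
    ∀ x ≥ 0, f x = 2 * x := by
  intro x hx
  have h := apply_one_eq_apply_zero_of_recurrence_of_nonneg (diffOrbit_add_two hge hfe hx)
    (diffOrbit_nonneg hge hx)
  simp only [diffOrbit] at h
  linarith

theorem stmt_1 (f : ℝ → ℝ) (hpos : ∀ x ≥ 0, f x ≥ 0)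
    (hge : ∀ x ≥ 0, f x ≥ x)
    (hfe : ∀ x ≥ 0, f (f x - x) = 2 * x) :
    ∀ x ≥ 0, f x = 2 * x :=
  stmt_1_general f hge hfe
end

section
/- There is no function f : ℕ⁺ → ℕ⁺ (positive integers to positive integers) satisfying f(n) = f(f(n−1)) + f(f(n+1)) for all integers n ≥ 2. -/
/-!
Since `f (f (n - 1)) ≥ 1`, the equation gives `f (f (n + 1)) < f n` for `n ≥ 2`. Induction on `k`
then shows `k + 1 ≤ f n` whenever `k + 1 ≤ n`, i.e. `n ≤ f n` for `n ≥ 1`, hence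
`f (n + 1) ≤ f (f (n + 1)) < f n`: the values `f 2, f 3, …` would form a strictly decreasing
sequence of natural numbers.
-/

namespace ApplyApplyLt

variable {f : ℕ → ℕ} (hpos : ∀ n ≥ 1, 1 ≤ f n) (hlt : ∀ n ≥ 2, f (f (n + 1)) < f n)
include hpos hlt

theorem add_one_le_apply (k : ℕ) : ∀ n, k + 1 ≤ n → k + 1 ≤ f n := by
  induction k with
  | zero => exact hpos
  | succ k ih =>
    intro n hn
    have hsucc : k + 1 ≤ f (n + 1) := ih (n + 1) (by omega)
    have := hlt n (by omega)
    have := ih (f (n + 1)) hsucc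
    omega

theorem self_le_apply {n : ℕ} (hn : 1 ≤ n) : n ≤ f n := by
  simpa [Nat.sub_add_cancel hn] using add_one_le_apply hpos hlt (n - 1) n (by omega)

theorem apply_succ_lt {n : ℕ} (hn : 2 ≤ n) : f (n + 1) < f n :=
  (self_le_apply hpos hlt (hpos (n + 1) (by omega))).trans_lt (hlt n hn)

end ApplyApplyLt

theorem not_exists_pos_apply_apply_succ_lt :
    ¬ ∃ f : ℕ → ℕ, (∀ n ≥ 1, 1 ≤ f n) ∧ ∀ n ≥ 2, f (f (n + 1)) < f n := by
  rintro ⟨f, hpos, hlt⟩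
  exact not_strictAnti_of_wellFoundedLT (fun k ↦ f (k + 2))
    (strictAnti_nat_of_succ_lt fun k ↦ ApplyApplyLt.apply_succ_lt hpos hlt (by omega))

theorem stmt_2 :
    ¬ ∃ f : ℕ → ℕ, (∀ n ≥ 1, 1 ≤ f n) ∧
      (∀ n ≥ 2, f n = f (f (n - 1)) + f (f (n + 1))) := by
  rintro ⟨f, hpos, hrec⟩
  refine not_exists_pos_apply_apply_succ_lt ⟨f, hpos, fun n hn ↦ ?_⟩
  have : 1 ≤ f (f (n - 1)) := hpos _ (hpos _ (by omega))
  have := hrec n hn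
  omega
end

section
/- Let A be a nonempty subset of ℝ and let g : A → [1,∞) be a bounded function such that for every bounded function f : A → [1,∞) with f ≠ g one has sup_{x∈A} (f(x)/g(x)) = (sup_{x∈A} f(x)) / (inf_{x∈A} g(x)). Then g is constant. -/
/-!
Test the hypothesis on `f = g + 1`, which differs from `g` everywhere. Writing `m = inf g` and
`M = sup g`, one has `sup f = M + 1` while `f / g = 1 + 1 / g ≤ 1 + 1 / m`, so the assumed identity
gives `(M + 1) / m ≤ 1 + 1 / m`, that is `M ≤ m`, and `g` is constant.
-/

open Set

lemma Set.Subsingleton.of_csSup_le_csInf {β : Type*} [ConditionallyCompleteLattice β] {s : Set β}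
    (ha : BddAbove s) (hb : BddBelow s) (h : sSup s ≤ sInf s) : s.Subsingleton :=
  fun _ hx _ hy =>
    le_antisymm ((le_csSup ha hx).trans (h.trans (csInf_le hb hy)))
      ((le_csSup ha hy).trans (h.trans (csInf_le hb hx)))

section

variable {α : Type*} {A : Set α} {g : α → ℝ}

lemma csSup_image_add_const (hA : A.Nonempty) (hg : BddAbove (g '' A)) (c : ℝ) :
    sSup ((fun x => g x + c) '' A) = sSup (g '' A) + c := by
  rw [← image_image (· + c) g A]
  exact ((OrderIso.addRight c).map_csSup' (hA.image g) hg).symm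

lemma csSup_image_add_const_div_le (hA : A.Nonempty) {m c : ℝ} (hm : 0 < m)
    (hgm : ∀ x ∈ A, m ≤ g x) (hc : 0 ≤ c) :
    sSup ((fun x => (g x + c) / g x) '' A) ≤ 1 + c / m := by
  refine csSup_le (hA.image _) ?_
  rintro _ ⟨x, hx, rfl⟩
  have hgx : 0 < g x := hm.trans_le (hgm x hx)
  calc (g x + c) / g x = 1 + c / g x := by field_simp
    _ ≤ 1 + c / m := by gcongr; exact hgm x hx

lemma csSup_le_csInf_of_csSup_add_one_div_eq (hA : A.Nonempty) (hg1 : ∀ x ∈ A, 1 ≤ g x)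
    (hgb : BddAbove (g '' A))
    (h : sSup ((fun x => (g x + 1) / g x) '' A) = sSup ((fun x => g x + 1) '' A) / sInf (g '' A)) :
    sSup (g '' A) ≤ sInf (g '' A) := by
  have hm1 : 1 ≤ sInf (g '' A) :=
    le_csInf (hA.image g) (forall_mem_image.2 hg1)
  have hm : 0 < sInf (g '' A) := one_pos.trans_le hm1
  have hgm : ∀ x ∈ A, sInf (g '' A) ≤ g x :=
    fun x hx => csInf_le ⟨1, forall_mem_image.2 hg1⟩ (mem_image_of_mem g hx)
  have hle := csSup_image_add_const_div_le hA hm hgm zero_le_one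
  rw [h, csSup_image_add_const hA hgb, div_le_iff₀ hm] at hle
  have : (1 + 1 / sInf (g '' A)) * sInf (g '' A) = sInf (g '' A) + 1 := by field_simp
  linarith

end

theorem stmt_3 (A : Set ℝ) (hA : A.Nonempty) (g : ℝ → ℝ)
    (hg1 : ∀ x ∈ A, 1 ≤ g x) (hgb : BddAbove (g '' A))
    (h : ∀ f : ℝ → ℝ, (∀ x ∈ A, 1 ≤ f x) → BddAbove (f '' A) →
      (∃ x ∈ A, f x ≠ g x) →
      sSup ((fun x => f x / g x) '' A) = sSup (f '' A) / sInf (g '' A)) :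
    ∀ x ∈ A, ∀ y ∈ A, g x = g y := by
  have hgb_below : BddBelow (g '' A) := ⟨1, forall_mem_image.2 hg1⟩
  have hfb : BddAbove ((fun x => g x + 1) '' A) := by
    rw [← image_image (· + 1) g A]
    exact (monotone_id.add_const 1).map_bddAbove hgb
  have hf_ne : ∃ x ∈ A, g x + 1 ≠ g x := hA.imp fun _ hx => ⟨hx, by simp⟩
  have hsup_le_inf := csSup_le_csInf_of_csSup_add_one_div_eq hA hg1 hgb <|
    h (fun x => g x + 1) (fun x hx => by linarith [hg1 x hx]) hfb hf_ne
  have hsub := Set.Subsingleton.of_csSup_le_csInf hgb hgb_below hsup_le_inf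
  exact fun x hx y hy => hsub (mem_image_of_mem g hx) (mem_image_of_mem g hy)
end

section
/- Let f : ℝ⁺ → ℝ⁺ be a function such that f(x·f(y) + y) = f(x·y) + f(y) for all x, y > 0. Then f(x) = x for all x > 0. -/
/-!
Taking `x = y / (y - f y)` when `f y < y` makes both arguments in the equation equal and forces
`f y = 0`, so `f y ≥ y` everywhere. Now suppose `f y = c * y` with `c > 1`. Substituting
`x = t / y` gives `f (c * t + y) = f t + c * y`, so the excess `g t = f t - t` satisfies
`g (c * t + y) = g t - (c - 1) * (t - y)`. On `[2y, ∞)`, which `t ↦ c * t + y` maps into itself,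
every step lowers `g` by at least `(c - 1) * y`, which contradicts `g ≥ 0`.
-/

open Set

lemma nat_mul_le_of_mapsTo_of_add_le {α : Type*} {s : Set α} {φ : α → α} {g : α → ℝ} {δ : ℝ}
    (hφ : MapsTo φ s s) (hg : ∀ t ∈ s, 0 ≤ g t) (hstep : ∀ t ∈ s, g (φ t) + δ ≤ g t) :
    ∀ n : ℕ, ∀ t ∈ s, n * δ ≤ g t := by
  intro n
  induction n with
  | zero => simpa using hg
  | succ n ih =>
    intro t ht
    have := ih (φ t) (hφ ht)
    have := hstep t ht
    push_cast
    linarith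

section

variable {f : ℝ → ℝ} (hfe : ∀ x > 0, ∀ y > 0, f (x * f y + y) = f (x * y) + f y)
include hfe

lemma le_apply_of_funeq (hpos : ∀ x > 0, f x > 0) {y : ℝ} (hy : 0 < y) : y ≤ f y := by
  by_contra! h
  have hd : 0 < y - f y := by linarith
  have hx : 0 < y / (y - f y) := div_pos hy hd
  have hxy : y / (y - f y) * f y + y = y / (y - f y) * y := by
    field_simp
    ring
  have := hfe _ hx y hy
  rw [hxy] at this
  linarith [hpos y hy]

lemma apply_div_mul_add_of_funeq {t y : ℝ} (ht : 0 < t) (hy : 0 < y) :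
    f (f y / y * t + y) = f t + f y := by
  have := hfe (t / y) (div_pos ht hy) y hy
  rwa [div_mul_cancel₀ t hy.ne', div_mul_comm] at this

lemma apply_sub_self_descent_of_funeq {t y : ℝ} (hy : 0 < y) (hfy : y ≤ f y) (ht : 2 * y ≤ t) :
    f (f y / y * t + y) - (f y / y * t + y) + (f y - y) ≤ f t - t := by
  rw [apply_div_mul_add_of_funeq hfe (by linarith) hy]
  have hc : 1 ≤ f y / y := (one_le_div hy).2 hfy
  have : f y / y * y = f y := div_mul_cancel₀ _ hy.ne'
  nlinarith

end

theorem stmt_4 (f : ℝ → ℝ) (hpos : ∀ x > 0, f x > 0)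
    (hfe : ∀ x > 0, ∀ y > 0, f (x * f y + y) = f (x * y) + f y) :
    ∀ x > 0, f x = x := by
  have hle : ∀ y > 0, y ≤ f y := fun y hy => le_apply_of_funeq hfe hpos hy
  intro y hy
  by_contra hne
  have hδ : 0 < f y - y := sub_pos.2 (lt_of_le_of_ne (hle y hy) (Ne.symm hne))
  have hmaps : MapsTo (fun t => f y / y * t + y) (Ici (2 * y)) (Ici (2 * y)) := by
    intro t (ht : 2 * y ≤ t)
    have : t ≤ f y / y * t := le_mul_of_one_le_left (by linarith) ((one_le_div hy).2 (hle y hy))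
    exact show 2 * y ≤ f y / y * t + y by linarith
  have hbound := nat_mul_le_of_mapsTo_of_add_le hmaps
    (fun t (ht : 2 * y ≤ t) => sub_nonneg.2 (hle t (by linarith)))
    (fun t (ht : 2 * y ≤ t) => apply_sub_self_descent_of_funeq hfe hy (hle y hy) ht)
  obtain ⟨n, hn⟩ := exists_nat_gt ((f (2 * y) - 2 * y) / (f y - y))
  have := hbound n (2 * y) self_mem_Ici
  rw [div_lt_iff₀ hδ] at hn
  linarith
end

section
/- Let f : ℝ⁺ → ℝ⁺ be a function such that f(x·y + f(x)) = (f(x) + f(y))/2 for all x, y > 0. Then f is constant, i.e. there exists c > 0 with f(x) = c for all x > 0. -/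
/-!
Setting `x = 1` and `c = f 1` gives the shift law `f (y + c) = (c + f y) / 2`. For fixed `a > 0`
and `d = f a - c`, feeding this law into the equation at `x = a` gives `f (a * y + d) = f y + d`
for large `y`, and then the shift law turns into `f (y + c / a) = (c - d + f y) / 2` for large `y`.
Two laws `f (y + s) = (k + f y) / 2` and `f (y + t) = (l + f y) / 2` force `k = l`, because
the shifts commute: computing `f (y + s + t)` both ways gives `k / 4 + l / 2 = l / 4 + k / 2`.
Hence `d = 0`.
-/

open Filter

theorem eq_of_eventually_map_add_eq_midpoint {f : ℝ → ℝ} {s t k l : ℝ}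
    (hs : ∀ᶠ z in atTop, f (z + s) = (k + f z) / 2)
    (ht : ∀ᶠ z in atTop, f (z + t) = (l + f z) / 2) : k = l := by
  have hs' : ∀ᶠ z in atTop, f (z + t + s) = (k + f (z + t)) / 2 :=
    (tendsto_atTop_add_const_right atTop t tendsto_id).eventually hs
  have ht' : ∀ᶠ z in atTop, f (z + s + t) = (l + f (z + s)) / 2 :=
    (tendsto_atTop_add_const_right atTop s tendsto_id).eventually ht
  obtain ⟨z, hsz, htz, hstz, htsz⟩ := (hs.and (ht.and (hs'.and ht'))).exists
  rw [add_right_comm] at htsz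
  linarith

section

variable {f : ℝ → ℝ} (hfe : ∀ x > 0, ∀ y > 0, f (x * y + f x) = (f x + f y) / 2)
include hfe

theorem map_add_map_one {y : ℝ} (hy : 0 < y) : f (y + f 1) = (f 1 + f y) / 2 := by
  simpa only [one_mul] using hfe 1 one_pos y hy

theorem eventually_map_mul_add {a : ℝ} (ha : 0 < a) :
    ∀ᶠ y in atTop, f (a * y + (f a - f 1)) = f y + (f a - f 1) := by
  have hlin : Tendsto (fun y => a * y + (f a - f 1)) atTop atTop :=
    tendsto_atTop_add_const_right _ _ (tendsto_id.const_mul_atTop ha)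
  filter_upwards [eventually_gt_atTop 0, hlin.eventually_gt_atTop 0] with y hy hpos
  have h := hfe a ha y hy
  rw [show a * y + f a = a * y + (f a - f 1) + f 1 by ring, map_add_map_one hfe hpos] at h
  linarith

theorem eventually_map_add_map_one_div {a : ℝ} (ha : 0 < a) :
    ∀ᶠ y in atTop, f (y + f 1 / a) = (2 * f 1 - f a + f y) / 2 := by
  have hlin : Tendsto (fun y => a * y + (f a - f 1)) atTop atTop :=
    tendsto_atTop_add_const_right _ _ (tendsto_id.const_mul_atTop ha)
  have hshift : Tendsto (fun y => y + f 1 / a) atTop atTop :=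
    tendsto_atTop_add_const_right _ _ tendsto_id
  filter_upwards [eventually_map_mul_add hfe ha, hshift.eventually (eventually_map_mul_add hfe ha),
    hlin.eventually_gt_atTop 0] with y hy hy' hpos
  rw [mul_add, mul_div_cancel₀ _ ha.ne', add_right_comm, map_add_map_one hfe hpos, hy] at hy'
  linarith

end

theorem stmt_5 (f : ℝ → ℝ) (hpos : ∀ x > 0, f x > 0)
    (hfe : ∀ x > 0, ∀ y > 0, f (x * y + f x) = (f x + f y) / 2) :
    ∃ c > 0, ∀ x > 0, f x = c := by
  refine ⟨f 1, hpos 1 one_pos, fun a ha => ?_⟩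
  have hshift_one : ∀ᶠ y in atTop, f (y + f 1) = (f 1 + f y) / 2 :=
    (eventually_gt_atTop 0).mono fun y hy => map_add_map_one hfe hy
  have := eq_of_eventually_map_add_eq_midpoint hshift_one (eventually_map_add_map_one_div hfe ha)
  linarith
end

section
/- Let f : ℝ⁺ → ℝ be a function such that f(x + y) + f(x + z) − f(x)·f(y + z) ≥ 1 for all x, y, z > 0. Then f(x) = 1 for all x > 0. -/
/-!
Setting `x = y = z = a` gives `f (2a) (2 - f a) ≥ 1`, and `y = z` gives
`2 f (x + y) ≥ 1 + f x f (2y)`. A value `f a ≥ 2` would force `f (2a) < 0`, while two applications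
of the second inequality push `f (3a/2)` and then `f (2a)` above `2`; hence `f < 2`, and then
`f > 0`. Now the first inequality, `f (2a) ≥ 1 / (2 - f a)`, propagates a lower bound
`n / (n + 1)` on `f` to `(n + 1) / (n + 2)`, and an upper bound `(n + 2) / (n + 1)` on `f` at `2a`
to `(n + 3) / (n + 2)` at `a`. Letting `n → ∞` squeezes `f` to `1`.
-/

lemma nonpos_of_forall_nat_mul_le {c d : ℝ} (h : ∀ n : ℕ, n * c ≤ d) : c ≤ 0 := by
  by_contra! hc
  obtain ⟨n, hn⟩ := exists_nat_gt (d / c)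
  have := h n
  rw [div_lt_iff₀ hc] at hn
  linarith

def SatisfiesFeIneq (f : ℝ → ℝ) : Prop :=
  ∀ x > 0, ∀ y > 0, ∀ z > 0, f (x + y) + f (x + z) - f x * f (y + z) ≥ 1

namespace SatisfiesFeIneq

variable {f : ℝ → ℝ} {a b : ℝ}

lemma one_le_mul_two_sub (hf : SatisfiesFeIneq f) (ha : 0 < a) :
    1 ≤ f (2 * a) * (2 - f a) := by
  have h := hf a ha a ha a ha
  rw [two_mul a]
  linarith

lemma one_add_mul_le_two_mul (hf : SatisfiesFeIneq f) (ha : 0 < a) (hb : 0 < b) :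
    1 + f a * f (2 * b) ≤ 2 * f (a + b) := by
  have h := hf a ha b hb b hb
  rw [two_mul b]
  linarith

lemma lt_two (hf : SatisfiesFeIneq f) (ha : 0 < a) : f a < 2 := by
  by_contra! hfa
  have hb : 0 < a / 2 := by positivity
  have h2a : f (2 * a) < 0 := by nlinarith [hf.one_le_mul_two_sub ha]
  have h3a : 2 < f (a + a / 2) := by
    have h := hf.one_add_mul_le_two_mul ha hb
    rw [mul_div_cancel₀ a two_ne_zero] at h
    nlinarith
  have h := hf.one_add_mul_le_two_mul (by positivity : 0 < a + a / 2) hb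
  rw [mul_div_cancel₀ a two_ne_zero, add_assoc, add_halves, ← two_mul] at h
  nlinarith

lemma pos (hf : SatisfiesFeIneq f) (ha : 0 < a) : 0 < f a := by
  have hb : 0 < a / 2 := by positivity
  have h := hf.one_le_mul_two_sub hb
  rw [mul_div_cancel₀ a two_ne_zero] at h
  nlinarith [hf.lt_two hb]

lemma nat_mul_one_sub_le (hf : SatisfiesFeIneq f) (n : ℕ) :
    ∀ x > 0, n * (1 - f x) ≤ f x := by
  induction n with
  | zero => intro x hx; simpa using (hf.pos hx).le
  | succ n ih =>
    intro x hx
    have hb : 0 < x / 2 := by positivity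
    have h := hf.one_le_mul_two_sub hb
    rw [mul_div_cancel₀ x two_ne_zero] at h
    push_cast
    nlinarith [ih _ hb, hf.pos hx]

lemma one_le (hf : SatisfiesFeIneq f) (ha : 0 < a) : 1 ≤ f a := by
  have := nonpos_of_forall_nat_mul_le fun n ↦ hf.nat_mul_one_sub_le n a ha
  linarith

lemma nat_mul_sub_one_le (hf : SatisfiesFeIneq f) (n : ℕ) :
    ∀ x > 0, n * (f x - 1) ≤ 2 - f x := by
  induction n with
  | zero => intro x hx; simpa using (hf.lt_two hx).le
  | succ n ih =>
    intro x hx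
    have h2x : 0 < 2 * x := by positivity
    have h := hf.one_le_mul_two_sub hx
    push_cast
    nlinarith [ih _ h2x, hf.one_le h2x, hf.lt_two hx]

lemma le_one (hf : SatisfiesFeIneq f) (ha : 0 < a) : f a ≤ 1 := by
  have := nonpos_of_forall_nat_mul_le fun n ↦ hf.nat_mul_sub_one_le n a ha
  linarith

end SatisfiesFeIneq

theorem stmt_7 (f : ℝ → ℝ)
    (hfe : ∀ x > 0, ∀ y > 0, ∀ z > 0,
      f (x + y) + f (x + z) - f x * f (y + z) ≥ 1) :
    ∀ x > 0, f x = 1 :=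
  fun _ hx ↦ le_antisymm (SatisfiesFeIneq.le_one hfe hx) (SatisfiesFeIneq.one_le hfe hx)
end

section
/- Let f : ℝ → (0,∞) be a continuous function such that ln(f(f(x))) = f(x) for all x ∈ ℝ and f(−x) = 1/f(x) for all x ∈ ℝ. Then f(x) = e^x for all x ∈ ℝ. -/
/-!
Taking `exp` of the functional equation gives `f y = exp y` for every `y` in the range of `f`.
That range is connected, contains `f 0 = 1` and is stable under `exp`, whose orbit of `1` is
unbounded; so it contains `[1, ∞)`, and by `f (-x) = 1 / f x` also `(0, 1]`. Hence `f = exp`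
on `(0, ∞)`, and the symmetry extends this to all of `ℝ`.
-/

open Real Set

theorem Real.add_nat_le_iterate_exp (a : ℝ) (n : ℕ) : a + n ≤ exp^[n] a := by
  induction n with
  | zero => simp
  | succ n ih =>
    rw [Function.iterate_succ_apply']
    push_cast
    linarith [add_one_le_exp (exp^[n] a)]

theorem IsPreconnected.Ici_subset_of_exp_mem {S : Set ℝ} (hS : IsPreconnected S) {a : ℝ}
    (ha : a ∈ S) (hexp : ∀ y ∈ S, exp y ∈ S) : Ici a ⊆ S := by
  have horbit : ∀ n, exp^[n] a ∈ S := by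
    intro n
    induction n with
    | zero => exact ha
    | succ n ih => rw [Function.iterate_succ_apply']; exact hexp _ ih
  intro y hy
  obtain ⟨n, hn⟩ := exists_nat_ge (y - a)
  exact hS.Icc_subset ha (horbit n) ⟨hy, by linarith [Real.add_nat_le_iterate_exp a n]⟩

section

variable {f : ℝ → ℝ}

theorem apply_eq_exp_of_mem_range (hpos : ∀ x, 0 < f x) (h1 : ∀ x, log (f (f x)) = f x)
    {y : ℝ} (hy : y ∈ range f) : f y = exp y := by
  obtain ⟨x, rfl⟩ := hy
  rw [← exp_log (hpos (f x)), h1 x]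

theorem apply_zero_eq_one (hpos : ∀ x, 0 < f x) (h2 : ∀ x, f (-x) = 1 / f x) : f 0 = 1 := by
  have h := h2 0
  rw [neg_zero, eq_div_iff (hpos 0).ne'] at h
  nlinarith [hpos 0]

theorem Ioi_zero_subset_range (hc : Continuous f) (hpos : ∀ x, 0 < f x)
    (h1 : ∀ x, log (f (f x)) = f x) (h2 : ∀ x, f (-x) = 1 / f x) : Ioi 0 ⊆ range f := by
  have hge : Ici 1 ⊆ range f :=
    (isPreconnected_range hc).Ici_subset_of_exp_mem ⟨0, apply_zero_eq_one hpos h2⟩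
      fun y hy => apply_eq_exp_of_mem_range hpos h1 hy ▸ mem_range_self y
  intro y (hy : 0 < y)
  rcases le_or_gt 1 y with hy1 | hy1
  · exact hge hy1
  · obtain ⟨x, hx⟩ := hge (one_le_one_div hy hy1.le)
    exact ⟨-x, by rw [h2, hx, one_div_one_div]⟩

end

theorem stmt_8 (f : ℝ → ℝ) (hc : Continuous f) (hpos : ∀ x : ℝ, 0 < f x)
    (h1 : ∀ x : ℝ, Real.log (f (f x)) = f x)
    (h2 : ∀ x : ℝ, f (-x) = 1 / f x) :
    ∀ x : ℝ, f x = Real.exp x := by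
  have hpos_eq : ∀ x, 0 < x → f x = exp x := fun x hx =>
    apply_eq_exp_of_mem_range hpos h1 (Ioi_zero_subset_range hc hpos h1 h2 hx)
  intro x
  rcases lt_trichotomy x 0 with hx | rfl | hx
  · rw [← neg_neg x, h2, hpos_eq (-x) (neg_pos.mpr hx), exp_neg, one_div, inv_inv, neg_neg]
  · rw [apply_zero_eq_one hpos h2, exp_zero]
  · exact hpos_eq x hx
end

section
/- Let f : ℝ⁺ → ℝ⁺ be a function such that f(x)·f(x + 2f(y)) = x·f(x + y) + f(x)·f(y) for all x, y > 0. Then f(x) = x for all x > 0. -/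
/-!
Write `g x = f x - x`. The equation at `(a, y)` rearranges to
`g (a + y) = g y + g (a + 2 f y) + (g a / f a) f (a + y)`, and elementary comparisons give
`y / 2 < f y`, `f u < 2 f v` for `u < v`, and `|g u| ≤ 3 u + E`.
Telescoping the identity along the orbit `z₀ = 1`, `z_{j+1} = 2 f z_j` writes `g (a + 1)` as a
bounded remainder plus `(g a / f a) ∑_{j<J} f (a + z_j)`, a sum of `J` terms of one sign, each of
size at least `|g a| / 2`. As `g (a + 1)` is linearly bounded, `J |g a| ≤ 12 a + K_J` for every `J`,
so `g = o(x)`. At a fixed `w` the identity then makes `(g w / f w) f (w + y) = o(y)`, while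
`f (w + y) > y / 2`; hence `g w = 0`.
-/

open Filter Asymptotics Finset

structure IsSolution (f : ℝ → ℝ) : Prop where
  pos : ∀ x > 0, f x > 0
  eq : ∀ x > 0, ∀ y > 0, f x * f (x + 2 * f y) = x * f (x + y) + f x * f y

noncomputable def orbit (f : ℝ → ℝ) : ℕ → ℝ
  | 0 => 1
  | j + 1 => 2 * f (orbit f j)

lemma Asymptotics.IsLittleO.comp_of_le_const_mul {g k : ℝ → ℝ} (hg : g =o[atTop] id)
    (hk : Tendsto k atTop atTop) {C : ℝ} (hkC : ∀ᶠ y in atTop, k y ≤ C * y) :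
    (fun y => g (k y)) =o[atTop] id := by
  refine (hg.comp_tendsto hk).trans_isBigO (IsBigO.of_bound C ?_)
  filter_upwards [hkC, hk.eventually_ge_atTop 0, eventually_ge_atTop 0] with y hy hk0 hy0
  simpa [abs_of_nonneg hk0, abs_of_nonneg hy0] using hy

namespace IsSolution

variable {f : ℝ → ℝ}

lemma lt_apply_of_two_mul_lt (hf : IsSolution f) {y t : ℝ} (hy : 0 < y) (ht : 2 * f y < t) :
    f y < f t := by
  have hx : 0 < t - 2 * f y := by linarith [hf.pos y hy]
  have h := hf.eq _ hx y hy
  rw [sub_add_cancel] at h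
  have := mul_pos hx (hf.pos (t - 2 * f y + y) (by linarith))
  nlinarith [hf.pos _ hx]

lemma half_lt (hf : IsSolution f) {y : ℝ} (hy : 0 < y) : y / 2 < f y := by
  by_contra! hle
  rcases (show 2 * f y ≤ y by linarith).lt_or_eq with hlt | heq
  · linarith [hf.lt_apply_of_two_mul_lt hy hlt]
  · have h := hf.eq y hy y hy
    rw [heq] at h
    nlinarith [mul_pos (hf.pos y hy) (hf.pos y hy), hf.pos (y + y) (by linarith)]

lemma lt_two_mul_apply (hf : IsSolution f) {u v : ℝ} (hu : 0 < u) (huv : u < v) :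
    f u < 2 * f v := by
  have hd : 0 < v - u := by linarith
  have h := hf.eq u hu (v - u) hd
  rw [add_sub_cancel] at h
  have hP := hf.half_lt (y := u + 2 * f (v - u)) (by linarith [hf.pos _ hd])
  nlinarith [mul_lt_mul_of_pos_left hP (hf.pos u hu), hf.pos v (by linarith)]

lemma apply_lt_four_mul (hf : IsSolution f) {u : ℝ} (hu : 2 * f 1 ≤ u) : f u < 4 * u := by
  have hf1 := hf.half_lt one_pos
  have hu0 : 0 < u := by linarith
  by_contra! hle
  have h := hf.eq u hu0 1 one_pos
  have hlt := hf.lt_two_mul_apply (u := u + 1) (v := u + 2 * f 1) (by linarith) (by linarith)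
  have hstep : f (u + 1) < 4 * f 1 := by
    nlinarith [mul_lt_mul_of_pos_left hlt (hf.pos u hu0), hf.pos (u + 1) (by linarith),
      hf.pos (u + 2 * f 1) (by linarith)]
  linarith [hf.lt_two_mul_apply hu0 (lt_add_one u)]

lemma exists_abs_sub_le (hf : IsSolution f) : ∃ E, ∀ u > 0, |f u - u| ≤ 3 * u + E := by
  have hf1 := hf.half_lt one_pos
  have hE := hf.pos (2 * f 1 + 1) (by linarith)
  refine ⟨2 * f (2 * f 1 + 1), fun u hu => abs_le.mpr ⟨?_, ?_⟩⟩
  · linarith [hf.half_lt hu]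
  · rcases lt_or_ge u (2 * f 1) with hlt | hge
    · linarith [hf.lt_two_mul_apply hu (show u < 2 * f 1 + 1 by linarith)]
    · linarith [hf.apply_lt_four_mul hge]

lemma sub_self_add_eq (hf : IsSolution f) {a y : ℝ} (ha : 0 < a) (hy : 0 < y) :
    f (a + y) - (a + y) =
      (f y - y) + (f (a + 2 * f y) - (a + 2 * f y)) + (f a - a) / f a * f (a + y) := by
  have h := hf.eq a ha y hy
  have hfa := (hf.pos a ha).ne'
  rw [mul_comm 2 (f y)] at h
  field_simp
  linear_combination -h

lemma orbit_pos (hf : IsSolution f) (j : ℕ) : 0 < orbit f j := by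
  induction j with
  | zero => exact one_pos
  | succ j ih => exact mul_pos two_pos (hf.pos _ ih)

lemma sub_self_add_one_eq_sum (hf : IsSolution f) {a : ℝ} (ha : 0 < a) (J : ℕ) :
    f (a + 1) - (a + 1) =
      ∑ j ∈ range J, (f (orbit f j) - orbit f j) +
        (f a - a) / f a * ∑ j ∈ range J, f (a + orbit f j) +
        (f (a + orbit f J) - (a + orbit f J)) := by
  induction J with
  | zero => simp [orbit]
  | succ J ih =>
    rw [ih, hf.sub_self_add_eq ha (hf.orbit_pos J), sum_range_succ, sum_range_succ, orbit]
    ring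

lemma card_mul_abs_sub_le (hf : IsSolution f) {a : ℝ} (ha : 0 < a) (z : ℕ → ℝ)
    (hz : ∀ j, 0 < z j) (J : ℕ) :
    J * |f a - a| ≤ 2 * |(f a - a) / f a * ∑ j ∈ range J, f (a + z j)| := by
  have hfa := hf.pos a ha
  have hsum : J * f a ≤ 2 * ∑ j ∈ range J, f (a + z j) := by
    simpa [mul_sum] using sum_le_sum (s := range J) fun j _ =>
      (hf.lt_two_mul_apply ha (lt_add_of_pos_right a (hz j))).le
  calc (J : ℝ) * |f a - a| = |f a - a| / f a * (J * f a) := by field_simp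
    _ ≤ |f a - a| / f a * (2 * ∑ j ∈ range J, f (a + z j)) := by gcongr
    _ = 2 * (|(f a - a) / f a| * ∑ j ∈ range J, f (a + z j)) := by
      rw [abs_div, abs_of_pos hfa]; ring
    _ ≤ 2 * |(f a - a) / f a * ∑ j ∈ range J, f (a + z j)| := by
      rw [abs_mul]; gcongr; exact le_abs_self _

lemma exists_card_mul_abs_sub_le (hf : IsSolution f) (J : ℕ) :
    ∃ K, ∀ a > 0, J * |f a - a| ≤ 12 * a + K := by
  obtain ⟨E, hE⟩ := hf.exists_abs_sub_le
  refine ⟨2 * (∑ j ∈ range J, |f (orbit f j) - orbit f j| + 3 * orbit f J + 3 + 2 * E),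
    fun a ha => ?_⟩
  have hzJ := hf.orbit_pos J
  have htel := hf.sub_self_add_one_eq_sum ha J
  have hsum := abs_sum_le_sum_abs (fun j => f (orbit f j) - orbit f j) (range J)
  have h1 := hE (a + 1) (by linarith)
  have h2 := hE (a + orbit f J) (by linarith)
  calc (J : ℝ) * |f a - a|
      ≤ 2 * |(f a - a) / f a * ∑ j ∈ range J, f (a + orbit f j)| :=
        hf.card_mul_abs_sub_le ha _ hf.orbit_pos J
    _ = 2 * |(f (a + 1) - (a + 1)) - ∑ j ∈ range J, (f (orbit f j) - orbit f j) -
          (f (a + orbit f J) - (a + orbit f J))| := by rw [htel]; ring_nf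
    _ ≤ 2 * (|f (a + 1) - (a + 1)| + |∑ j ∈ range J, (f (orbit f j) - orbit f j)| +
          |f (a + orbit f J) - (a + orbit f J)|) := by
      gcongr
      exact (abs_sub _ _).trans (add_le_add_left (abs_sub _ _) _)
    _ ≤ _ := by linarith

lemma isLittleO_sub_id (hf : IsSolution f) : (fun x => f x - x) =o[atTop] id := by
  refine isLittleO_iff.mpr fun c hc => ?_
  obtain ⟨J, hJ⟩ := exists_nat_ge (24 / c)
  have hJc : 24 ≤ J * c := (div_le_iff₀ hc).mp hJ
  have hJ0 : (0 : ℝ) < J := pos_of_mul_pos_left (by linarith) hc.le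
  obtain ⟨K, hK⟩ := hf.exists_card_mul_abs_sub_le J
  filter_upwards [eventually_ge_atTop (K / 12), eventually_gt_atTop 0] with a haK ha
  rw [Real.norm_eq_abs, Real.norm_eq_abs, id, abs_of_pos ha]
  refine le_of_mul_le_mul_left ?_ hJ0
  nlinarith [hK a ha]

lemma isLittleO_sub_self_div_mul (hf : IsSolution f) {w : ℝ} (hw : 0 < w) :
    (fun y => (f w - w) / f w * f (w + y)) =o[atTop] id := by
  have hg := hf.isLittleO_sub_id
  obtain ⟨E, hE⟩ := hf.exists_abs_sub_le
  have hshift : (fun y => f (w + y) - (w + y)) =o[atTop] id :=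
    hg.comp_of_le_const_mul (tendsto_atTop_add_const_left _ w tendsto_id) (C := 2)
      (by filter_upwards [eventually_ge_atTop w] with y hy; linarith)
  have hjump : (fun y => f (w + 2 * f y) - (w + 2 * f y)) =o[atTop] id := by
    refine hg.comp_of_le_const_mul (tendsto_atTop_mono' _ ?_ tendsto_id) (C := 9) ?_
    · filter_upwards [eventually_gt_atTop 0] with y hy
      show y ≤ w + 2 * f y
      linarith [hf.half_lt hy]
    · filter_upwards [eventually_ge_atTop (w + 2 * E), eventually_gt_atTop 0] with y hy hy0
      linarith [(abs_le.mp (hE y hy0)).2]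
  refine ((hshift.sub hg).sub hjump).congr' ?_ EventuallyEq.rfl
  filter_upwards [eventually_gt_atTop 0] with y hy
  rw [hf.sub_self_add_eq hw hy]
  ring

end IsSolution

theorem stmt_9 (f : ℝ → ℝ) (hpos : ∀ x > 0, f x > 0)
    (hfe : ∀ x > 0, ∀ y > 0,
      f x * f (x + 2 * f y) = x * f (x + y) + f x * f y) :
    ∀ x > 0, f x = x := by
  intro w hw
  have hf : IsSolution f := ⟨hpos, hfe⟩
  have hfw := hpos w hw
  suffices hκ : (f w - w) / f w = 0 by
    rw [div_eq_zero_iff, sub_eq_zero] at hκ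
    exact hκ.resolve_right hfw.ne'
  by_contra hκ
  have ho := (isLittleO_const_mul_left_iff hκ).mp (hf.isLittleO_sub_self_div_mul hw)
  have hgrowth : (id : ℝ → ℝ) =O[atTop] fun y => f (w + y) := by
    refine IsBigO.of_bound 2 ?_
    filter_upwards [eventually_gt_atTop 0] with y hy
    have := hf.half_lt (y := w + y) (by linarith)
    rw [Real.norm_eq_abs, Real.norm_eq_abs, id, abs_of_pos hy, abs_of_pos (hpos _ (by linarith))]
    linarith
  refine isLittleO_irrefl (Eventually.frequently ?_) (ho.trans_isBigO hgrowth)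
  filter_upwards [eventually_gt_atTop 0] with y hy using (hpos _ (by linarith)).ne'
end

section
/- Let f : ℝ⁺ → ℝ⁺ be a function such that f(x)·f(x + 2f(y)) = x·f(x + y) + f(x)·f(y) for all x, y > 0. Then f(x) > x/2 for all x > 0. -/
/-! Both terms on the right of the equation are positive, so `f (x + 2 f y)` exceeds `f y`
and `x f (x + y) < f x f (x + 2 f y)`. If `2 f y < y`, the first inequality at `x = y - 2 f y`
reads `f y < f y`; if `2 f y = y`, the second at `x = y` gives `y < f y`. -/

section

variable {f : ℝ → ℝ} (hpos : ∀ x > 0, f x > 0)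
  (hfe : ∀ x > 0, ∀ y > 0, f x * f (x + 2 * f y) = x * f (x + y) + f x * f y)
include hpos hfe

lemma mul_map_add_lt {x y : ℝ} (hx : 0 < x) (hy : 0 < y) :
    x * f (x + y) < f x * f (x + 2 * f y) := by
  have := mul_pos (hpos x hx) (hpos y hy)
  linarith [hfe x hx y hy]

lemma map_lt_map_add_two_mul {x y : ℝ} (hx : 0 < x) (hy : 0 < y) :
    f y < f (x + 2 * f y) := by
  have := mul_pos hx (hpos (x + y) (by linarith))
  exact lt_of_mul_lt_mul_left (by linarith [hfe x hx y hy]) (hpos x hx).le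

end

theorem stmt_10 (f : ℝ → ℝ) (hpos : ∀ x > 0, f x > 0)
    (hfe : ∀ x > 0, ∀ y > 0,
      f x * f (x + 2 * f y) = x * f (x + y) + f x * f y) :
    ∀ x > 0, f x > x / 2 := by
  intro y hy
  by_contra! hle
  rcases hle.lt_or_eq with hlt | heq
  · have := map_lt_map_add_two_mul hpos hfe (x := y - 2 * f y) (by linarith) hy
    rw [sub_add_cancel] at this
    exact this.false
  · have h := mul_map_add_lt hpos hfe hy hy
    rw [heq, mul_div_cancel₀ y two_ne_zero] at h
    have : y < y / 2 := lt_of_mul_lt_mul_right h (hpos (y + y) (by linarith)).le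
    linarith
end

section
/- Let f : ℝ⁺ → ℝ⁺ be a function such that f(x² + y²) + 2·f(x)·f(y) = (x + y)² for all x, y > 0. Then f(x) = x for all x > 0. -/
/-! Writing `s = x ^ 2 + y ^ 2` with `x * y` arbitrarily small, the equation and the positivity
of `f` give `f s < s + 2 * x * y`, hence `f s ≤ s`. Then `x = y` yields
`2 * f x ^ 2 = 4 * x ^ 2 - f (2 * x ^ 2) ≥ 2 * x ^ 2`, i.e. `f x ≥ x`. -/

lemma exists_sq_add_sq_eq_of_mul_lt {s δ : ℝ} (hs : 0 < s) (hδ : 0 < δ) :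
    ∃ x > 0, ∃ y > 0, x ^ 2 + y ^ 2 = s ∧ x * y < δ := by
  have hr : 0 < √s := Real.sqrt_pos.mpr hs
  obtain ⟨x, hx, hxlt⟩ := exists_between (lt_min hr (div_pos hδ hr))
  have hxr : x < √s := hxlt.trans_le (min_le_left _ _)
  have hxδ : x * √s < δ := (lt_div_iff₀ hr).mp (hxlt.trans_le (min_le_right _ _))
  have hxs : x ^ 2 < s := by simpa [Real.sq_sqrt hs.le] using pow_lt_pow_left₀ hxr hx.le two_ne_zero
  refine ⟨x, hx, √(s - x ^ 2), Real.sqrt_pos.mpr (by linarith), ?_, ?_⟩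
  · rw [Real.sq_sqrt (by linarith)]
    ring
  · calc x * √(s - x ^ 2) ≤ x * √s := by gcongr; exact sub_le_self _ (sq_nonneg x)
      _ < δ := hxδ

lemma apply_le_self_of_sq_add_sq {f : ℝ → ℝ} (hpos : ∀ x > 0, f x > 0)
    (hfe : ∀ x > 0, ∀ y > 0, f (x ^ 2 + y ^ 2) + 2 * f x * f y = (x + y) ^ 2) :
    ∀ s > 0, f s ≤ s := by
  intro s hs
  refine le_of_forall_pos_lt_add fun ε hε => ?_
  obtain ⟨x, hx, y, hy, hsum, hxy⟩ := exists_sq_add_sq_eq_of_mul_lt hs (half_pos hε)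
  have hfxy : 0 < f x * f y := mul_pos (hpos x hx) (hpos y hy)
  have := hfe x hx y hy
  rw [hsum] at this
  nlinarith

theorem stmt_11 (f : ℝ → ℝ) (hpos : ∀ x > 0, f x > 0)
    (hfe : ∀ x > 0, ∀ y > 0,
      f (x ^ 2 + y ^ 2) + 2 * f x * f y = (x + y) ^ 2) :
    ∀ x > 0, f x = x := by
  have hle := apply_le_self_of_sq_add_sq hpos hfe
  intro x hx
  have hdiag := hfe x hx x hx
  have hdiag_le : f (x ^ 2 + x ^ 2) ≤ x ^ 2 + x ^ 2 := hle _ (by positivity)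
  have hsq : x ^ 2 ≤ f x ^ 2 := by nlinarith
  exact le_antisymm (hle x hx) ((pow_le_pow_iff_left₀ hx.le (hpos x hx).le two_ne_zero).mp hsq)
end

section
/- Let f : ℝ⁺ → ℝ⁺ be a function such that f(x·y + f(x)) = f(x)·f(y) + x for all x, y > 0. Then f(x) = x for all x > 0. -/
/-!
Choosing `y` with `x * y + f x = x` shows `f x ≥ x`. With `c = f 1`, the equation at `x = 1`
reads `f (y + c) = c * f y + 1`; evaluating `f (2c + f (2c))` once through this shift and once
through the equation at `(2c, 1)` gives `(c - 1)² ≤ 0`, so `c = 1`. Then `f (y + 1) = f y + 1`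
and `f (x + f x) = x + f x`, and the equation at `(x, (x + 1) / x)` collapses to
`f x * f ((x + 1) / x) = f x + 1`, which together with `f ((x + 1) / x) ≥ (x + 1) / x`
forces `f x ≤ x`.
-/

namespace PositiveFunctionalEquation

variable {f : ℝ → ℝ}

theorem le_apply (hpos : ∀ x > 0, f x > 0)
    (hfe : ∀ x > 0, ∀ y > 0, f (x * y + f x) = f x * f y + x)
    {x : ℝ} (hx : 0 < x) : x ≤ f x := by
  by_contra! hlt
  have hy : 0 < (x - f x) / x := div_pos (by linarith) hx
  have harg : x * ((x - f x) / x) + f x = x := by field_simp; ring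
  have e := hfe x hx _ hy
  rw [harg] at e
  nlinarith [mul_pos (hpos x hx) (hpos _ hy)]

theorem apply_add_apply_one (hfe : ∀ x > 0, ∀ y > 0, f (x * y + f x) = f x * f y + x)
    {y : ℝ} (hy : 0 < y) : f (y + f 1) = f 1 * f y + 1 := by
  simpa using hfe 1 one_pos y hy

theorem apply_one (hpos : ∀ x > 0, f x > 0)
    (hfe : ∀ x > 0, ∀ y > 0, f (x * y + f x) = f x * f y + x) : f 1 = 1 := by
  set c := f 1
  have hc0 : 0 < c := hpos 1 one_pos
  have h2c : 0 < 2 * c := by positivity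
  have hf2c : 2 * c ≤ f (2 * c) := le_apply hpos hfe h2c
  have hy : 0 < c + f (2 * c) := by linarith
  have via_equation : f (2 * c + f (2 * c)) = f (2 * c) * c + 2 * c := by
    simpa using hfe (2 * c) h2c 1 one_pos
  have via_shift : f (2 * c + f (2 * c)) = c * f (c + f (2 * c)) + 1 := by
    convert apply_add_apply_one hfe hy using 2; ring
  have hlow := mul_le_mul_of_nonneg_left (le_apply hpos hfe hy) hc0.le
  nlinarith [sq_nonneg (c - 1)]

theorem apply_add_one (hpos : ∀ x > 0, f x > 0)
    (hfe : ∀ x > 0, ∀ y > 0, f (x * y + f x) = f x * f y + x)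
    {y : ℝ} (hy : 0 < y) : f (y + 1) = f y + 1 := by
  simpa [apply_one hpos hfe] using apply_add_apply_one hfe hy

theorem apply_add_apply_self (hpos : ∀ x > 0, f x > 0)
    (hfe : ∀ x > 0, ∀ y > 0, f (x * y + f x) = f x * f y + x)
    {x : ℝ} (hx : 0 < x) : f (x + f x) = x + f x := by
  have e := hfe x hx 1 one_pos
  rw [mul_one, apply_one hpos hfe] at e
  linarith

theorem apply_le (hpos : ∀ x > 0, f x > 0)
    (hfe : ∀ x > 0, ∀ y > 0, f (x * y + f x) = f x * f y + x)
    {x : ℝ} (hx : 0 < x) : f x ≤ x := by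
  have hy : 0 < (x + 1) / x := by positivity
  have harg : x * ((x + 1) / x) + f x = (x + f x) + 1 := by field_simp; ring
  have e := hfe x hx _ hy
  rw [harg, apply_add_one hpos hfe (by linarith [hpos x hx]),
    apply_add_apply_self hpos hfe hx] at e
  have hlow := mul_le_mul_of_nonneg_left (le_apply hpos hfe hy) (hpos x hx).le
  have hsplit : f x * ((x + 1) / x) = f x + f x / x := by field_simp
  have : f x / x ≤ 1 := by linarith
  rwa [div_le_one hx] at this

end PositiveFunctionalEquation

theorem stmt_12 (f : ℝ → ℝ) (hpos : ∀ x > 0, f x > 0)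
    (hfe : ∀ x > 0, ∀ y > 0, f (x * y + f x) = f x * f y + x) :
    ∀ x > 0, f x = x := fun _ hx =>
  le_antisymm (PositiveFunctionalEquation.apply_le hpos hfe hx)
    (PositiveFunctionalEquation.le_apply hpos hfe hx)
end

section
/- Let f : ℝ⁺ → ℝ⁺ be a function such that f(x·y + f(x)) = f(x)·f(y) + x for all x, y > 0. Then f(x) ≥ x for all x > 0. -/
theorem stmt_13 (f : ℝ → ℝ) (hpos : ∀ x > 0, f x > 0)
    (hfe : ∀ x > 0, ∀ y > 0, f (x * y + f x) = f x * f y + x) :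
    ∀ x > 0, f x ≥ x := by
  intro x hx
  by_contra! hlt
  -- If f x < x, the choice y = (x - f x) / x makes x * y + f x = x, so the equation reads
  -- f x = f x * f y + x > x.
  set y := (x - f x) / x
  have hy : 0 < y := div_pos (sub_pos.2 hlt) hx
  have hshift : x * y + f x = x := by simp only [y]; field_simp; ring
  have key := hfe x hx y hy
  rw [hshift] at key
  linarith [mul_pos (hpos x hx) (hpos y hy)]
end

section
/- Let f : ℝ⁺ → ℝ⁺ be a function such that f(x + f(x·y)) + y = f(x)·f(y) + 1 for all x, y > 0. Then f(x) = x + 1 for all x > 0. -/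
/-!
Putting `x = 1` shows that `f` is injective. If `f` decreased somewhere, say `z₁ < z₂` with
`f z₁ > f z₂`, then for `y = (z₂ - z₁) / (f z₁ - f z₂)` the map `x ↦ x + f (x * y)` would agree at
`z₁ / y` and `z₂ / y`, and the equation would force `f (z₁ / y) = f (z₂ / y)`; so `f` is monotone.
Hence `f` has right limits `p` at `0` and `q` at `p`, and letting `x ↓ 0` in the equation gives
`q + y = p * f y + 1`. Thus `f` is affine, and comparing coefficients leaves only `f x = x + 1`.
-/

open Set Filter Topology

theorem injOn_Ioi_of_funeq {f : ℝ → ℝ}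
    (hfe : ∀ x > 0, ∀ y > 0, f (x + f (x * y)) + y = f x * f y + 1) :
    InjOn f (Ioi 0) := by
  intro a ha b hb hab
  have hfa := hfe 1 one_pos a ha
  have hfb := hfe 1 one_pos b hb
  simp only [one_mul, hab] at hfa hfb
  linarith

theorem monotoneOn_Ioi_of_funeq {f : ℝ → ℝ} (hpos : ∀ x > 0, f x > 0)
    (hfe : ∀ x > 0, ∀ y > 0, f (x + f (x * y)) + y = f x * f y + 1) :
    MonotoneOn f (Ioi 0) := by
  intro z₁ hz₁ z₂ hz₂ hle
  by_contra! hlt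
  have hne : z₁ ≠ z₂ := fun h => hlt.ne (by rw [h])
  set y := (z₂ - z₁) / (f z₁ - f z₂) with hy_def
  have hy : 0 < y := div_pos (sub_pos.2 (lt_of_le_of_ne hle hne)) (sub_pos.2 hlt)
  have hmul (z : ℝ) : z / y * y = z := div_mul_cancel₀ z hy.ne'
  have hshift : z₁ / y + f z₁ = z₂ / y + f z₂ := by
    rw [hy_def]
    field_simp
    ring
  have h₁ := hfe (z₁ / y) (div_pos hz₁ hy) y hy
  have h₂ := hfe (z₂ / y) (div_pos hz₂ hy) y hy
  rw [hmul, hshift] at h₁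
  rw [hmul] at h₂
  have hf : f (z₁ / y) = f (z₂ / y) := mul_right_cancel₀ (hpos y hy).ne' (by linarith)
  exact hne ((div_left_inj' hy.ne').1
    (injOn_Ioi_of_funeq hfe (div_pos hz₁ hy) (div_pos hz₂ hy) hf))

theorem tendsto_nhdsGT_sInf_image_Ioi {f : ℝ → ℝ} (hpos : ∀ x > 0, f x > 0)
    (hmono : MonotoneOn f (Ioi 0)) {x₀ : ℝ} (hx₀ : 0 ≤ x₀) :
    Tendsto f (𝓝[>] x₀) (𝓝 (sInf (f '' Ioi x₀))) :=
  (hmono.mono (Ioi_subset_Ioi hx₀)).tendsto_nhdsGT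
    ⟨0, forall_mem_image.2 fun x hx => (hpos x (hx₀.trans_lt hx)).le⟩

theorem exists_limit_relation_of_funeq {f : ℝ → ℝ} (hpos : ∀ x > 0, f x > 0)
    (hfe : ∀ x > 0, ∀ y > 0, f (x + f (x * y)) + y = f x * f y + 1) :
    ∃ p q : ℝ, ∀ y > 0, q + y = p * f y + 1 := by
  have hmono := monotoneOn_Ioi_of_funeq hpos hfe
  set p := sInf (f '' Ioi 0)
  have hbdd : BddBelow (f '' Ioi 0) := ⟨0, forall_mem_image.2 fun z hz => (hpos z hz).le⟩
  have hp_le : ∀ x > 0, p ≤ f x := fun x hx => csInf_le hbdd (mem_image_of_mem f hx)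
  have hp : 0 ≤ p := le_csInf (nonempty_Ioi.image f) (forall_mem_image.2 fun z hz => (hpos z hz).le)
  refine ⟨p, sInf (f '' Ioi p), fun y hy => ?_⟩
  have hlim₀ := tendsto_nhdsGT_sInf_image_Ioi hpos hmono le_rfl
  have hlimp := tendsto_nhdsGT_sInf_image_Ioi hpos hmono hp
  have hxy : Tendsto (fun x => x * y) (𝓝[>] 0) (𝓝[>] 0) := by
    refine tendsto_nhdsWithin_iff.2 ⟨?_, ?_⟩
    · simpa using tendsto_nhdsWithin_of_tendsto_nhds ((continuous_mul_const y).tendsto 0)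
    · filter_upwards [self_mem_nhdsWithin] with x hx using mul_pos hx hy
  have hinner : Tendsto (fun x => x + f (x * y)) (𝓝[>] 0) (𝓝[>] p) := by
    refine tendsto_nhdsWithin_iff.2 ⟨?_, ?_⟩
    · simpa using (tendsto_nhdsWithin_of_tendsto_nhds tendsto_id).add (hlim₀.comp hxy)
    · filter_upwards [self_mem_nhdsWithin] with x (hx : 0 < x)
      exact lt_add_of_pos_of_le hx (hp_le _ (mul_pos hx hy))
  refine tendsto_nhds_unique_of_eventuallyEq ((hlimp.comp hinner).add_const y)
    ((hlim₀.mul_const (f y)).add_const 1) ?_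
  filter_upwards [self_mem_nhdsWithin] with x hx using hfe x hx y hy

theorem eq_add_one_of_limit_relation {f : ℝ → ℝ} (hpos : ∀ x > 0, f x > 0)
    (hfe : ∀ x > 0, ∀ y > 0, f (x + f (x * y)) + y = f x * f y + 1) {p q : ℝ}
    (hpq : ∀ y > 0, q + y = p * f y + 1) :
    ∀ x > 0, f x = x + 1 := by
  obtain ⟨c, rfl⟩ : ∃ c, q = c + 1 := ⟨q - 1, by ring⟩
  have hlin : ∀ z > 0, p * f z = z + c := fun z hz => by linarith [hpq z hz]
  have hcoeff : ∀ x > 0, ∀ y > 0,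
      (p - c) * x + (p ^ 2 - c) * y + (c + p * c - c ^ 2 - p ^ 2) = 0 := by
    intro x hx y hy
    have hxy := mul_pos hx hy
    linear_combination p ^ 2 * hfe x hx y hy - p * hlin _ (add_pos hx (hpos _ hxy))
      - hlin _ hxy + p * f y * hlin x hx + (x + c) * hlin y hy
  have h₁₁ := hcoeff 1 one_pos 1 one_pos
  have h₂₁ := hcoeff 2 two_pos 1 one_pos
  have h₁₂ := hcoeff 1 one_pos 2 two_pos
  have hpc : p = c := by linarith
  have hp : p * (p - 1) = 0 := by linear_combination h₁₂ - h₂₁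
  rcases mul_eq_zero.1 hp with hp | hp
  · linarith [hlin 1 one_pos, show p * f 1 = 0 by rw [hp, zero_mul]]
  · intro x hx
    linear_combination hlin x hx - (f x - 1) * hp - hpc

theorem stmt_14 (f : ℝ → ℝ) (hpos : ∀ x > 0, f x > 0)
    (hfe : ∀ x > 0, ∀ y > 0, f (x + f (x * y)) + y = f x * f y + 1) :
    ∀ x > 0, f x = x + 1 := by
  obtain ⟨p, q, hpq⟩ := exists_limit_relation_of_funeq hpos hfe
  exact eq_add_one_of_limit_relation hpos hfe hpq
end

section
/- Let f : ℝ → ℝ be a monotone increasing function (x ≤ y implies f(x) ≤ f(y)) such that f(f(x²) + y + f(y)) = x² + 2·f(y) for all x, y ∈ ℝ. Then f(x) = x for all x ∈ ℝ. -/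
/-!
Write `c = f 0`. Taking `y = 0` gives `f (f s + c) = s + 2c` for `s ≥ 0`, so `f` is injective
on `[0, ∞)` and `f (2c) = 2c`. If `c > 0`, the points `3c` and `5c` are both sent to `4c`.
If `c < 0`, monotonicity squeezes `f s` between `s + 2c` and `s - c` on `[0, ∞)`, while comparing
the equation at `y = 2c` with the one at `y = 0` gives `f (s + 2c) = f s + 3c` for large `s`;
three such steps move `f` by `9c` over a distance of `6c`, which the squeeze forbids.
Hence `c = 0`, `f` is a monotone involution of `[0, ∞)` and so the identity there, and then
`f (s + x + f x) = s + 2 f x` with `s` large forces `f x = x`.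
-/

def SatisfiesFE (f : ℝ → ℝ) : Prop :=
  ∀ s y : ℝ, 0 ≤ s → f (f s + y + f y) = s + 2 * f y

namespace SatisfiesFE

variable {f : ℝ → ℝ} {s : ℝ}

theorem of_sq (hfe : ∀ x y : ℝ, f (f (x ^ 2) + y + f y) = x ^ 2 + 2 * f y) : SatisfiesFE f :=
  fun s y hs => by simpa [Real.sq_sqrt hs] using hfe √s y

theorem map_map_add_map_zero (hf : SatisfiesFE f) (hs : 0 ≤ s) :
    f (f s + f 0) = s + 2 * f 0 := by
  simpa using hf s 0 hs

theorem injOn (hf : SatisfiesFE f) : Set.InjOn f (Set.Ici 0) := fun a ha b hb hab => by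
  have h := hf.map_map_add_map_zero ha
  rw [hab, hf.map_map_add_map_zero hb] at h
  linarith

theorem map_two_mul_map_zero (hf : SatisfiesFE f) : f (2 * f 0) = 2 * f 0 := by
  simpa [two_mul] using hf.map_map_add_map_zero le_rfl

theorem map_zero_nonpos (hf : SatisfiesFE f) : f 0 ≤ 0 := by
  by_contra! hc
  have h5 : f (5 * f 0) = 4 * f 0 := by
    have h := hf 0 (2 * f 0) le_rfl
    rw [hf.map_two_mul_map_zero, show f 0 + 2 * f 0 + 2 * f 0 = 5 * f 0 by ring] at h
    linarith
  have h3 : f (3 * f 0) = 4 * f 0 := by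
    have h := hf.map_map_add_map_zero (s := 2 * f 0) (by linarith)
    rw [hf.map_two_mul_map_zero, show 2 * f 0 + f 0 = 3 * f 0 by ring] at h
    linarith
  have := hf.injOn (Set.mem_Ici.2 (by linarith)) (Set.mem_Ici.2 (by linarith)) (h5.trans h3.symm)
  linarith

section NegativeMapZero

variable (hf : SatisfiesFE f) (hmono : Monotone f) (hc : f 0 < 0)
include hf hmono hc

theorem map_add_map_zero_lt (hs : 0 ≤ s) : f s + f 0 < s := by
  by_contra! h
  have := hmono h
  rw [hf.map_map_add_map_zero hs] at this
  linarith [hmono hs]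

theorem add_two_mul_map_zero_le_map (hs : 0 ≤ s) : s + 2 * f 0 ≤ f s := by
  have := hmono (map_add_map_zero_lt hf hmono hc hs).le
  rwa [hf.map_map_add_map_zero hs] at this

/-- `f (f s + 4 f 0)` and `f (f (s + 2 f 0) + f 0)` both equal `s + 4 f 0` (the equation at
`y = 2 f 0` and at `y = 0`), so injectivity identifies the arguments. -/
theorem map_add_two_mul_map_zero (hs : -6 * f 0 ≤ s) : f (s + 2 * f 0) = f s + 3 * f 0 := by
  have hs₀ : 0 ≤ s := by linarith
  have hs₂ : 0 ≤ s + 2 * f 0 := by linarith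
  have h₁ := hf s (2 * f 0) hs₀
  rw [hf.map_two_mul_map_zero] at h₁
  have h₂ := hf.map_map_add_map_zero hs₂
  have hlow₀ := add_two_mul_map_zero_le_map hf hmono hc hs₀
  have hlow₂ := add_two_mul_map_zero_le_map hf hmono hc hs₂
  have := hf.injOn (x₁ := f s + 2 * f 0 + 2 * f 0) (x₂ := f (s + 2 * f 0) + f 0)
    (Set.mem_Ici.2 (by linarith)) (Set.mem_Ici.2 (by linarith)) (by rw [h₁, h₂]; ring)
  linarith

end NegativeMapZero

theorem map_zero_nonneg (hf : SatisfiesFE f) (hmono : Monotone f) : 0 ≤ f 0 := by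
  by_contra! hc
  set c := f 0
  have h₁ := map_add_two_mul_map_zero hf hmono hc (s := -10 * c) (by linarith)
  have h₂ := map_add_two_mul_map_zero hf hmono hc (s := -8 * c) (by linarith)
  have h₃ := map_add_two_mul_map_zero hf hmono hc (s := -6 * c) le_rfl
  have hupper := map_add_map_zero_lt hf hmono hc (s := -10 * c) (by linarith)
  have hlower := add_two_mul_map_zero_le_map hf hmono hc (s := -4 * c) (by linarith)
  rw [show -10 * c + 2 * c = -8 * c by ring] at h₁
  rw [show -8 * c + 2 * c = -6 * c by ring] at h₂
  rw [show -6 * c + 2 * c = -4 * c by ring] at h₃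
  linarith

theorem map_eq_self_of_nonneg (hf : SatisfiesFE f) (hmono : Monotone f) (hs : 0 ≤ s) :
    f s = s := by
  have h := hf.map_map_add_map_zero hs
  rw [le_antisymm hf.map_zero_nonpos (hf.map_zero_nonneg hmono), add_zero, mul_zero,
    add_zero] at h
  rcases lt_trichotomy (f s) s with hlt | heq | hgt
  · linarith [hmono hlt.le]
  · exact heq
  · linarith [hmono hgt.le]

theorem map_eq_self (hf : SatisfiesFE f) (hmono : Monotone f) (x : ℝ) : f x = x := by
  set s := max 0 (-(x + f x))
  have hs : 0 ≤ s := le_max_left _ _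
  have harg : 0 ≤ s + x + f x := by linarith [le_max_right 0 (-(x + f x))]
  have h := hf s x hs
  rw [map_eq_self_of_nonneg hf hmono hs, map_eq_self_of_nonneg hf hmono harg] at h
  linarith

end SatisfiesFE

theorem stmt_16 (f : ℝ → ℝ) (hmono : Monotone f)
    (hfe : ∀ x y : ℝ, f (f (x ^ 2) + y + f y) = x ^ 2 + 2 * f y) :
    ∀ x : ℝ, f x = x :=
  (SatisfiesFE.of_sq hfe).map_eq_self hmono
end

section
/- Let f : ℝ⁺ → ℝ⁺ be a function such that f(x)·f(y) = 2·f(x + y·f(x)) for all x, y > 0. Then f(x) = 2 for all x > 0. -/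
/-!
If `f b > f a` for some `b < a`, the two arguments `a + y f a` and `b + y f b` coincide for a
suitable `y > 0`, which forces `f a = f b`; so `f` is monotone. Put `A = 1 + f 1`. Evaluating
`f 1 * f 1 * f z` in two ways gives `f (A + t) = f (A + 2 t)` for every `t > 0`, and together with
monotonicity this makes `f` constant on `(A, ∞)`. Finally, for any `x`, choosing `y` so that both
`y` and `x + y f x` exceed `A` turns the equation into `f x * c = 2 * c` with `c > 0`.
-/

open Set

theorem MonotoneOn.eq_of_apply_add_two_mul_eq {g : ℝ → ℝ} {A : ℝ} (hmono : MonotoneOn g (Ioi A))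
    (hdbl : ∀ t > 0, g (A + 2 * t) = g (A + t)) {u v : ℝ} (hu : A < u) (hv : A < v) :
    g u = g v := by
  wlog huv : u ≤ v generalizing u v
  · exact (this hv hu (le_of_not_ge huv)).symm
  have hpow : ∀ n : ℕ, ∀ t > 0, g (A + 2 ^ n * t) = g (A + t) := by
    intro n
    induction n with
    | zero => simp
    | succ k ih =>
      intro t ht
      rw [pow_succ, mul_comm _ (2 : ℝ), mul_assoc, hdbl _ (by positivity), ih t ht]
  have hut : 0 < u - A := sub_pos.mpr hu
  obtain ⟨n, hn⟩ := pow_unbounded_of_one_lt ((v - A) / (u - A)) one_lt_two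
  rw [div_lt_iff₀ hut] at hn
  have hw : g (A + 2 ^ n * (u - A)) = g u := by rw [hpow n _ hut, add_sub_cancel]
  refine le_antisymm (hmono hu hv huv) ?_
  calc g v ≤ g (A + 2 ^ n * (u - A)) :=
        hmono hv (by simp only [mem_Ioi]; nlinarith [pow_pos (two_pos (α := ℝ)) n]) (by linarith)
    _ = g u := hw

section FunctionalEquation

variable {f : ℝ → ℝ} (hpos : ∀ x > 0, f x > 0)
  (hfe : ∀ x > 0, ∀ y > 0, f x * f y = 2 * f (x + y * f x))
include hpos hfe

theorem monotoneOn_Ioi_of_funeq_s17 : MonotoneOn f (Ioi 0) := by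
  intro b hb a ha hba
  by_contra! h
  have hlt : b < a := lt_of_le_of_ne hba (by rintro rfl; exact lt_irrefl _ h)
  have hd : 0 < f b - f a := sub_pos.mpr h
  set y := (a - b) / (f b - f a)
  have hy : 0 < y := div_pos (sub_pos.mpr hlt) hd
  have hmeet : a + y * f a = b + y * f b := by
    have : y * (f b - f a) = a - b := div_mul_cancel₀ _ hd.ne'
    linarith
  have hfy : f a * f y = f b * f y := by
    rw [hfe a ha y hy, hfe b hb y hy, hmeet]
  exact h.ne (mul_right_cancel₀ (hpos y hy).ne' hfy)

theorem apply_one_add_apply_one_add_two_mul (t : ℝ) (ht : 0 < t) :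
    f (1 + f 1 + 2 * t) = f (1 + f 1 + t) := by
  have hf1 : 0 < f 1 := hpos 1 one_pos
  set A := 1 + f 1
  set z := 2 * t / f 1 ^ 2
  have hz : 0 < z := by positivity
  have hzf : z * f 1 ^ 2 = 2 * t := div_mul_cancel₀ _ (by positivity)
  have hA : f 1 * f 1 = 2 * f A := by simpa using hfe 1 one_pos 1 one_pos
  have h1 := hfe A (by positivity) z hz
  have h2 := hfe 1 one_pos z hz
  have h3 := hfe 1 one_pos (1 + z * f 1) (by positivity)
  have hpt1 : A + z * f A = A + t := by nlinarith
  have hpt2 : 1 + (1 + z * f 1) * f 1 = A + 2 * t := by simp only [A]; nlinarith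
  rw [hpt1] at h1
  rw [hpt2] at h3
  -- both sides equal `f 1 * f 1 * f z / 4`
  linear_combination (f z * hA + 2 * h1 - f 1 * h2 - 2 * h3) / 4

end FunctionalEquation

theorem stmt_17 (f : ℝ → ℝ) (hpos : ∀ x > 0, f x > 0)
    (hfe : ∀ x > 0, ∀ y > 0, f x * f y = 2 * f (x + y * f x)) :
    ∀ x > 0, f x = 2 := by
  intro x hx
  set A := 1 + f 1
  have hA : 0 < A := by linarith [hpos 1 one_pos]
  have hconst : ∀ u > A, ∀ v > A, f u = f v := fun u hu v hv =>
    ((monotoneOn_Ioi_of_funeq_s17 hpos hfe).mono (Ioi_subset_Ioi hA.le)).eq_of_apply_add_two_mul_eq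
      (apply_one_add_apply_one_add_two_mul hpos hfe) hu hv
  have hfx := hpos x hx
  set y := A + A / f x
  have hyA : A < y := by simp only [y]; linarith [div_pos hA hfx]
  have hxyA : A < x + y * f x := by
    have : y * f x = A * f x + A := by simp only [y]; field_simp
    nlinarith
  have hfy := hpos y (hA.trans hyA)
  have hxy := hfe x hx y (hA.trans hyA)
  rw [hconst _ hxyA y hyA] at hxy
  exact mul_right_cancel₀ hfy.ne' hxy
end

section
/- Let f : ℝ⁺ → ℝ⁺ be a function such that f(y·(f(x))³ + x) = x³·f(y) + f(x) for all x, y > 0. Then f(x) = x for all x > 0. -/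
/-!
`f` is strictly increasing, and `f 1 ≥ 1` since otherwise `y ↦ y * f 1 ^ 3 + 1` has a positive
fixed point `y`, where the equation at `x = 1` reads `f y = f y + f 1`. Substituting
`x ↦ x * f 1 ^ 3 + 1` into the equation and comparing with the equation at `x = 1` shows, by
monotonicity, that `(f 1 - 1) * f x < f 1`; as `f` is unbounded, `f 1 = 1`. Then
`f (y + 1) = f y + 1`, so `f - id` is bounded by monotonicity. Rearranged, the equation reads
`y * (f x ^ 3 - x ^ 3) = x ^ 3 * (f y - y) + (f x - x) - (f z - z)` with `z = y * f x ^ 3 + x`,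
whose right-hand side is bounded in `y`; hence `f x ^ 3 = x ^ 3`.
-/

open Set

theorem eq_zero_of_forall_abs_mul_le {a B : ℝ} (h : ∀ y > 0, |y * a| ≤ B) : a = 0 := by
  by_contra ha
  have ha' : 0 < |a| := abs_pos.2 ha
  have hB := h ((|B| + 1) / |a|) (by positivity)
  rw [abs_mul, abs_of_pos (by positivity : 0 < (|B| + 1) / |a|), div_mul_cancel₀ _ ha'.ne'] at hB
  linarith [le_abs_self B]

section FunctionalEquation

variable {f : ℝ → ℝ}

theorem strictMonoOn_of_fe (hpos : ∀ x > 0, f x > 0)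
    (hfe : ∀ x > 0, ∀ y > 0, f (y * (f x) ^ 3 + x) = x ^ 3 * f y + f x) :
    StrictMonoOn f (Ioi 0) := by
  intro a ha b _ hab
  have hfa : 0 < f a ^ 3 := pow_pos (hpos a ha) 3
  have hy : 0 < (b - a) / f a ^ 3 := div_pos (sub_pos.2 hab) hfa
  have h := hfe a ha _ hy
  rw [div_mul_cancel₀ _ hfa.ne', sub_add_cancel] at h
  rw [h]
  exact lt_add_of_pos_left _ (mul_pos (pow_pos ha 3) (hpos _ hy))

theorem one_le_apply_one_of_fe (hpos : ∀ x > 0, f x > 0)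
    (hfe : ∀ x > 0, ∀ y > 0, f (y * (f x) ^ 3 + x) = x ^ 3 * f y + f x) :
    1 ≤ f 1 := by
  by_contra! hc
  have hc3 : 0 < 1 - f 1 ^ 3 := sub_pos.2 (pow_lt_one₀ (hpos 1 one_pos).le hc (by norm_num))
  have hfix : 1 / (1 - f 1 ^ 3) * f 1 ^ 3 + 1 = 1 / (1 - f 1 ^ 3) := by field_simp; ring
  have h := hfe 1 one_pos (1 / (1 - f 1 ^ 3)) (by positivity)
  rw [hfix, one_pow, one_mul] at h
  linarith [hpos 1 one_pos]

theorem apply_one_mul_lt_of_fe (hpos : ∀ x > 0, f x > 0)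
    (hfe : ∀ x > 0, ∀ y > 0, f (y * (f x) ^ 3 + x) = x ^ 3 * f y + f x)
    (hc : 1 ≤ f 1) {x : ℝ} (hx : 0 < x) :
    f 1 * f x < f x + f 1 := by
  set c := f 1
  have hfx := hpos x hx
  have hshift : f (x * c ^ 3 + 1) = f x + c := by simpa using hfe 1 one_pos x hx
  have hu := hfe (x * c ^ 3 + 1) (by positivity) 1 one_pos
  have hz : f (f x ^ 3 + x) = x ^ 3 * c + f x := by simpa using hfe x hx 1 one_pos
  have hv := hfe 1 one_pos (f x ^ 3 + x) (by positivity)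
  rw [hshift, one_mul] at hu
  rw [hz, one_pow, one_mul] at hv
  have hgrow : x ^ 3 < (x * c ^ 3 + 1) ^ 3 := by
    have : 1 ≤ c ^ 3 := one_le_pow₀ hc
    exact pow_lt_pow_left₀ (by nlinarith) hx.le (by norm_num)
  have hlt : f ((f x ^ 3 + x) * c ^ 3 + 1) < f ((f x + c) ^ 3 + (x * c ^ 3 + 1)) := by
    rw [hu, hv]
    nlinarith
  have hcubes : (c * f x) ^ 3 < (f x + c) ^ 3 := by
    have := (strictMonoOn_of_fe hpos hfe).lt_iff_lt
      (by positivity : (0 : ℝ) < (f x ^ 3 + x) * c ^ 3 + 1)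
      (by positivity : (0 : ℝ) < (f x + c) ^ 3 + (x * c ^ 3 + 1)) |>.1 hlt
    nlinarith
  exact (pow_lt_pow_iff_left₀ (by positivity) (by positivity) (by norm_num)).1 hcubes

theorem not_bddAbove_image_of_fe (hpos : ∀ x > 0, f x > 0)
    (hfe : ∀ x > 0, ∀ y > 0, f (y * (f x) ^ 3 + x) = x ^ 3 * f y + f x) :
    ¬ BddAbove (f '' Ioi 0) := by
  rintro ⟨M, hM⟩
  have hc := hpos 1 one_pos
  set x := max 1 (M / f 1)
  have hx1 : 1 ≤ x := le_max_left _ _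
  have hxM : M ≤ x * f 1 := (div_le_iff₀ hc).1 (le_max_right _ _)
  have hx3 : x ≤ x ^ 3 := le_self_pow₀ hx1 (by norm_num)
  have hfx := hpos x (by positivity)
  have hz : 0 < 1 * f x ^ 3 + x := by positivity
  have hle : f (1 * f x ^ 3 + x) ≤ M := hM (mem_image_of_mem f hz)
  rw [hfe x (by positivity) 1 one_pos] at hle
  nlinarith

theorem apply_one_eq_one_of_fe (hpos : ∀ x > 0, f x > 0)
    (hfe : ∀ x > 0, ∀ y > 0, f (y * (f x) ^ 3 + x) = x ^ 3 * f y + f x) :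
    f 1 = 1 := by
  have hc := one_le_apply_one_of_fe hpos hfe
  refine le_antisymm ?_ hc
  by_contra! hc1
  refine not_bddAbove_image_of_fe hpos hfe ⟨f 1 / (f 1 - 1), ?_⟩
  rintro _ ⟨x, hx, rfl⟩
  rw [le_div_iff₀ (sub_pos.2 hc1)]
  linarith [apply_one_mul_lt_of_fe hpos hfe hc hx]

theorem apply_add_natCast_of_fe
    (hfe : ∀ x > 0, ∀ y > 0, f (y * (f x) ^ 3 + x) = x ^ 3 * f y + f x)
    (hf1 : f 1 = 1) {y : ℝ} (hy : 0 < y) (n : ℕ) :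
    f (y + n) = f y + n := by
  induction n with
  | zero => simp
  | succ n ih =>
    have h := hfe 1 one_pos (y + n) (by positivity)
    rw [hf1, one_pow, mul_one, one_mul, ih] at h
    push_cast
    rw [← add_assoc, h, add_assoc]

theorem abs_apply_sub_le_one_of_fe (hpos : ∀ x > 0, f x > 0)
    (hfe : ∀ x > 0, ∀ y > 0, f (y * (f x) ^ 3 + x) = x ^ 3 * f y + f x)
    (hf1 : f 1 = 1) {x : ℝ} (hx : 0 < x) :
    |f x - x| ≤ 1 := by
  have hmono := (strictMonoOn_of_fe hpos hfe).monotoneOn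
  set n := ⌊x⌋₊
  have hfn : f (n + 1) = n + 1 := by
    rw [add_comm, apply_add_natCast_of_fe hfe hf1 one_pos, hf1, add_comm]
  have hfx1 : f (x + 1) = f x + 1 := by
    simpa using apply_add_natCast_of_fe hfe hf1 hx 1
  have hupper : f x ≤ n + 1 :=
    hfn ▸ hmono hx (by positivity : (0 : ℝ) < n + 1) (Nat.lt_floor_add_one x).le
  have hlower : (n : ℝ) + 1 ≤ f x + 1 :=
    hfn ▸ hfx1 ▸ hmono (by positivity : (0 : ℝ) < n + 1) (by positivity : 0 < x + 1)
      (by linarith [Nat.floor_le hx.le])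
  rw [abs_sub_le_iff]
  constructor <;> linarith [Nat.floor_le hx.le, Nat.lt_floor_add_one x]

theorem apply_pow_three_of_fe (hpos : ∀ x > 0, f x > 0)
    (hfe : ∀ x > 0, ∀ y > 0, f (y * (f x) ^ 3 + x) = x ^ 3 * f y + f x)
    {x : ℝ} (hx : 0 < x) :
    f x ^ 3 = x ^ 3 := by
  have hf1 := apply_one_eq_one_of_fe hpos hfe
  have hdev : ∀ t > 0, |f t - t| ≤ 1 := fun t ht => abs_apply_sub_le_one_of_fe hpos hfe hf1 ht
  refine sub_eq_zero.1 (eq_zero_of_forall_abs_mul_le (B := x ^ 3 + 2) fun y hy => ?_)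
  have hfx := hpos x hx
  set z := y * f x ^ 3 + x
  have hz : 0 < z := by positivity
  have hrearr : y * (f x ^ 3 - x ^ 3) = x ^ 3 * (f y - y) + (f x - x) - (f z - z) := by
    rw [hfe x hx y hy]; ring
  have hy' := abs_le.1 (hdev y hy)
  have hx' := abs_le.1 (hdev x hx)
  have hz' := abs_le.1 (hdev z hz)
  have hx3 : 0 < x ^ 3 := by positivity
  rw [hrearr, abs_le]
  constructor <;> nlinarith

end FunctionalEquation

theorem stmt_18 (f : ℝ → ℝ) (hpos : ∀ x > 0, f x > 0)
    (hfe : ∀ x > 0, ∀ y > 0, f (y * (f x) ^ 3 + x) = x ^ 3 * f y + f x) :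
    ∀ x > 0, f x = x := fun x hx =>
  (pow_left_inj₀ (hpos x hx).le hx.le (by norm_num)).1 (apply_pow_three_of_fe hpos hfe hx)
end

section
/- Let f, g, h : ℝ⁺ → ℝ⁺ be functions such that f(g(x) + y) = h(x) + f(y) for all x, y > 0. Then the function x ↦ g(x)/h(x) is constant on ℝ⁺, i.e. there exists a constant c > 0 with g(x) = c·h(x) for all x > 0. -/
/-!
If `f (a + y) = k + f y` for all `y > 0`, then `f (n * a + y) = n * k + f y`, and positivity of `f`
gives `f t > n * k` whenever `t > n * a`. Evaluating at `t = N * b + 1` a second translation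
`f (b + y) = l + f y` yields `N * l + f 1 > (N * b / a - 1) * k` for every `N`, so `k / a ≤ l / b`.
Applied in both directions to `(a, k) = (g x, h x)` and `(b, l) = (g 1, h 1)` this forces
`h x / g x = h 1 / g 1`.
-/

section Translation

variable {f : ℝ → ℝ} {a k : ℝ}

theorem apply_nat_mul_add_of_translate (hfa : ∀ y > 0, f (a + y) = k + f y) (ha : 0 < a) :
    ∀ n : ℕ, ∀ y > 0, f (n * a + y) = n * k + f y := by
  intro n
  induction n with
  | zero => simp
  | succ n ih =>
    intro y hy
    have hpos : 0 < (n : ℝ) * a + y := by positivity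
    calc f ((n + 1 : ℕ) * a + y) = f (a + (n * a + y)) := by push_cast; ring_nf
      _ = (n + 1 : ℕ) * k + f y := by rw [hfa _ hpos, ih y hy]; push_cast; ring

theorem nat_mul_lt_apply_of_translate (hf : ∀ y > 0, 0 < f y) (hfa : ∀ y > 0, f (a + y) = k + f y)
    (ha : 0 < a) {n : ℕ} {t : ℝ} (ht : n * a < t) : n * k < f t := by
  have hy : 0 < t - n * a := sub_pos.mpr ht
  have := apply_nat_mul_add_of_translate hfa ha n _ hy
  rw [add_sub_cancel] at this
  linarith [hf _ hy]

theorem mul_le_mul_of_translate {b l : ℝ} (hf : ∀ y > 0, 0 < f y)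
    (hfa : ∀ y > 0, f (a + y) = k + f y) (hfb : ∀ y > 0, f (b + y) = l + f y)
    (ha : 0 < a) (hb : 0 < b) (hk : 0 ≤ k) : k * b ≤ l * a := by
  have bound : ∀ N : ℕ, N * (k * b - l * a) < a * (f 1 + k) := by
    intro N
    set m := ⌊N * b / a⌋₊
    have hm_le : m * a ≤ N * b := (le_div_iff₀ ha).mp (Nat.floor_le (by positivity))
    have hm_gt : N * b / a - 1 < m := Nat.sub_one_lt_floor _
    have hlow : m * k < f (N * b + 1) :=
      nat_mul_lt_apply_of_translate hf hfa ha (by linarith)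
    rw [apply_nat_mul_add_of_translate hfb hb N 1 one_pos] at hlow
    have : (N * b / a - 1) * k ≤ m * k := mul_le_mul_of_nonneg_right hm_gt.le hk
    have : (N * b / a - 1) * k * a = (N * b - a) * k := by field_simp
    nlinarith
  by_contra! hlt
  obtain ⟨N, hN⟩ := exists_nat_gt (a * (f 1 + k) / (k * b - l * a))
  rw [div_lt_iff₀ (sub_pos.mpr hlt)] at hN
  linarith [bound N]

end Translation

theorem stmt_19 (f g h : ℝ → ℝ)
    (hfpos : ∀ x > 0, f x > 0) (hgpos : ∀ x > 0, g x > 0)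
    (hhpos : ∀ x > 0, h x > 0)
    (hfe : ∀ x > 0, ∀ y > 0, f (g x + y) = h x + f y) :
    ∃ c > 0, ∀ x > 0, g x = c * h x := by
  have hg1 := hgpos 1 one_pos
  have hh1 := hhpos 1 one_pos
  refine ⟨g 1 / h 1, by positivity, fun x hx => ?_⟩
  have hle := mul_le_mul_of_translate hfpos (hfe x hx) (hfe 1 one_pos) (hgpos x hx) hg1
    (hhpos x hx).le
  have hge := mul_le_mul_of_translate hfpos (hfe 1 one_pos) (hfe x hx) hg1 (hgpos x hx) hh1.le
  field_simp
  linarith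
end
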